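/- arXiv:1809.04666 — 2 statements merged into one kernel-verified Lean document; each statement's English description precedes it below -/
import Mathlib

section
/- Let 1 ≤ k < n be integers. There exist constants L₁, L₂ > 0 depending only on n and k such that for every P ∈ ℋ, the parametrizing map f_P : ℝ^k → P, f_P(t) = (t, g_P(t)), satisfies L₁|t − t′| ≤ |f_P(t) − f_P(t′)| ≤ L₂|t − t′| for all t, t′ ∈ ℝ^k; in particular f_P is bi-Lipschitz with universally bounded constants. -/
/-!
Membership in `ℋ` puts the points of the graph over `0, e₁, …, e_k` into `[0,1]ⁿ`, so `a⁰` and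
every `a⁰ + bⁱ` lie in `[0,1]^{n-k}`, whence all entries of the `bⁱ` are bounded by `1` in absolute
value. Since `|f_P t - f_P t'|² = |t - t'|² + |∑ᵢ (tᵢ - t'ᵢ) bⁱ|²`, one may take `L₁ = 1`, and
Cauchy–Schwarz gives `L₂ = √(1 + (n - k) k)`.
-/

open MeasureTheory Set
open scoped ENNReal

noncomputable section

/-- The closed unit cube `[0,1]ⁿ`. -/
def unitCube (n : ℕ) : Set (EuclideanSpace ℝ (Fin n)) :=
  {x | ∀ i, x i ∈ Set.Icc (0 : ℝ) 1}

/-- The `(n-k)`-dimensional affine subspaces `H₀ = V₀^⊥` (for `i = 0`) and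
`H_i = e_i + H₀` (for `i = 1, …, k`), where `V₀` is the span of the first `k`
standard basis vectors. -/
def Hplane (n k : ℕ) (i : Fin (k + 1)) : Set (EuclideanSpace ℝ (Fin n)) :=
  {x | ∀ j : Fin n, (j : ℕ) < k → x j = if (j : ℕ) + 1 = (i : ℕ) then 1 else 0}

/-- Membership in `ℋ`: the set `S ⊆ ℝⁿ` meets each `H_i`, `i = 0, 1, …, k`,
in exactly one point, and this point lies in `[0,1]ⁿ`. -/
def MemH (n k : ℕ) (S : Set (EuclideanSpace ℝ (Fin n))) : Prop :=
  ∀ i : Fin (k + 1), ∃ x ∈ unitCube n, S ∩ Hplane n k i = {x}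

/-- The orthogonal projection `proj₀` of `ℝⁿ` onto `V₀`, the span of the first `k`
standard basis vectors. -/
def proj0 (n k : ℕ) (x : EuclideanSpace ℝ (Fin n)) : EuclideanSpace ℝ (Fin n) :=
  WithLp.toLp 2 fun j => if (j : ℕ) < k then x j else 0

/-- The point of `ℝⁿ = ℝ^k × ℝ^{n-k}` with first `k` coordinates given by `u` and the
remaining `n - k` coordinates given by `v`. -/
def glue (n k : ℕ) (u : Fin k → ℝ) (v : Fin (n - k) → ℝ) : EuclideanSpace ℝ (Fin n) :=
  WithLp.toLp 2 fun i => if h : (i : ℕ) < k then u ⟨i, h⟩ else v ⟨(i : ℕ) - k, by have := i.isLt; omega⟩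

/-- The affine map `g(t) = a⁰ + t₁ b¹ + ⋯ + t_k b^k : ℝ^k → ℝ^{n-k}` with coefficients
`a : Fin (n-k) → ℝ` and `b : Fin k → Fin (n-k) → ℝ`. -/
def gmap (n k : ℕ) (a : Fin (n - k) → ℝ) (b : Fin k → Fin (n - k) → ℝ)
    (t : Fin k → ℝ) : Fin (n - k) → ℝ :=
  fun j => a j + ∑ i, t i * b i j

/-- The `k`-plane `{(t, g(t)) : t ∈ ℝ^k} ⊆ ℝⁿ`, the graph of the affine map with
coefficients (code) `(a, b)`. -/
def graphSet (n k : ℕ) (a : Fin (n - k) → ℝ) (b : Fin k → Fin (n - k) → ℝ) :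
    Set (EuclideanSpace ℝ (Fin n)) :=
  Set.range fun t : Fin k → ℝ => glue n k t (gmap n k a b t)

lemma glue_apply_of_lt {n k : ℕ} (u : Fin k → ℝ) (v : Fin (n - k) → ℝ) (i : Fin n)
    (h : (i : ℕ) < k) : glue n k u v i = u ⟨i, h⟩ := by
  simp [glue, h]

lemma glue_apply_add {n k : ℕ} (u : Fin k → ℝ) (v : Fin (n - k) → ℝ) (j : Fin (n - k)) :
    glue n k u v ⟨k + j, by omega⟩ = v j := by
  simp only [glue, dif_neg (show ¬ k + (j : ℕ) < k by omega)]
  exact congrArg v (Fin.ext (by simp))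

lemma EuclideanSpace.dist_sq_eq_sum {ι : Type*} [Fintype ι] (x y : EuclideanSpace ℝ ι) :
    dist x y ^ 2 = ∑ i, (x i - y i) ^ 2 := by
  rw [EuclideanSpace.dist_eq, Real.sq_sqrt (Finset.sum_nonneg fun _ _ => sq_nonneg _)]
  simp only [Real.dist_eq, sq_abs]

lemma Fin.sum_univ_eq_sum_lt_add_sum_ge {M : Type*} [AddCommMonoid M] {n k : ℕ} (hkn : k ≤ n)
    (f : Fin n → M) :
    ∑ i, f i = ∑ i : Fin k, f ⟨i, by omega⟩ + ∑ j : Fin (n - k), f ⟨k + j, by omega⟩ := by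
  rw [← Fin.sum_congr' f (show k + (n - k) = n by omega), Fin.sum_univ_add]
  rfl

lemma dist_glue_sq {n k : ℕ} (hkn : k ≤ n) (u u' : Fin k → ℝ) (v v' : Fin (n - k) → ℝ) :
    dist (glue n k u v) (glue n k u' v') ^ 2 =
      ∑ i, (u i - u' i) ^ 2 + ∑ j, (v j - v' j) ^ 2 := by
  rw [EuclideanSpace.dist_sq_eq_sum, Fin.sum_univ_eq_sum_lt_add_sum_ge hkn]
  simp only [glue_apply_add]
  congr 1
  exact Finset.sum_congr rfl fun i _ => by rw [glue_apply_of_lt, glue_apply_of_lt]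

lemma gmap_sub_gmap {n k : ℕ} (a : Fin (n - k) → ℝ) (b : Fin k → Fin (n - k) → ℝ)
    (t t' : Fin k → ℝ) (j : Fin (n - k)) :
    gmap n k a b t j - gmap n k a b t' j = ∑ i, (t i - t' i) * b i j := by
  simp only [gmap, add_sub_add_left_eq_sub, ← Finset.sum_sub_distrib, sub_mul]

lemma dist_glue_gmap_sq {n k : ℕ} (hkn : k ≤ n) (a : Fin (n - k) → ℝ)
    (b : Fin k → Fin (n - k) → ℝ) (t t' : EuclideanSpace ℝ (Fin k)) :
    dist (glue n k t (gmap n k a b t)) (glue n k t' (gmap n k a b t')) ^ 2 =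
      dist t t' ^ 2 + ∑ j, (∑ i, (t i - t' i) * b i j) ^ 2 := by
  simp only [dist_glue_sq hkn, gmap_sub_gmap, EuclideanSpace.dist_sq_eq_sum]

/-- The parameter of the point of the graph lying on `H_i`: `0` for `i = 0`, `e_i` otherwise. -/
def vertex (k : ℕ) (i : Fin (k + 1)) : Fin k → ℝ :=
  fun j => if (j : ℕ) + 1 = i then 1 else 0

lemma glue_vertex_mem_Hplane {n k : ℕ} (i : Fin (k + 1)) (v : Fin (n - k) → ℝ) :
    glue n k (vertex k i) v ∈ Hplane n k i := fun j hj => by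
  rw [glue_apply_of_lt _ _ _ hj]
  rfl

lemma MemH.gmap_vertex_mem_Icc {n k : ℕ} {a : Fin (n - k) → ℝ} {b : Fin k → Fin (n - k) → ℝ}
    (h : MemH n k (graphSet n k a b)) (i : Fin (k + 1)) (j : Fin (n - k)) :
    gmap n k a b (vertex k i) j ∈ Icc 0 1 := by
  obtain ⟨x, hx, hgraph⟩ := h i
  have hmem : glue n k (vertex k i) (gmap n k a b (vertex k i)) ∈ graphSet n k a b ∩ Hplane n k i :=
    ⟨⟨_, rfl⟩, glue_vertex_mem_Hplane i _⟩
  rw [hgraph, mem_singleton_iff] at hmem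
  simpa only [← hmem, glue_apply_add] using hx ⟨k + j, by omega⟩

lemma gmap_vertex_zero {n k : ℕ} (a : Fin (n - k) → ℝ) (b : Fin k → Fin (n - k) → ℝ) :
    gmap n k a b (vertex k 0) = a := by
  ext j
  simp [gmap, vertex]

lemma gmap_vertex_succ {n k : ℕ} (a : Fin (n - k) → ℝ) (b : Fin k → Fin (n - k) → ℝ)
    (i : Fin k) (j : Fin (n - k)) : gmap n k a b (vertex k i.succ) j = a j + b i j := by
  simp [gmap, vertex, ← Fin.ext_iff]

lemma MemH.abs_coeff_le_one {n k : ℕ} {a : Fin (n - k) → ℝ} {b : Fin k → Fin (n - k) → ℝ}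
    (h : MemH n k (graphSet n k a b)) (i : Fin k) (j : Fin (n - k)) : |b i j| ≤ 1 := by
  have h₀ := h.gmap_vertex_mem_Icc 0 j
  have h₁ := h.gmap_vertex_mem_Icc i.succ j
  rw [gmap_vertex_zero] at h₀
  rw [gmap_vertex_succ] at h₁
  exact abs_le.2 ⟨by linarith [h₀.2, h₁.1], by linarith [h₀.1, h₁.2]⟩

lemma sum_sq_sum_mul_le {ι κ : Type*} [Fintype ι] [Fintype κ] (s : ι → ℝ) (b : ι → κ → ℝ)
    (hb : ∀ i j, |b i j| ≤ 1) :
    ∑ j, (∑ i, s i * b i j) ^ 2 ≤ Fintype.card κ * Fintype.card ι * ∑ i, s i ^ 2 := by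
  calc ∑ j, (∑ i, s i * b i j) ^ 2
      ≤ ∑ _j : κ, (∑ i, s i ^ 2) * Fintype.card ι := by
        gcongr with j
        calc (∑ i, s i * b i j) ^ 2 ≤ (∑ i, s i ^ 2) * ∑ i, b i j ^ 2 :=
              Finset.sum_mul_sq_le_sq_mul_sq _ _ _
          _ ≤ (∑ i, s i ^ 2) * Fintype.card ι := by
              gcongr
              calc ∑ i, b i j ^ 2 ≤ ∑ _i : ι, (1 : ℝ) :=
                    Finset.sum_le_sum fun i _ => (sq_le_one_iff_abs_le_one _).2 (hb i j)
                _ = Fintype.card ι := by simp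
    _ = Fintype.card κ * Fintype.card ι * ∑ i, s i ^ 2 := by
        rw [Finset.sum_const, Finset.card_univ, nsmul_eq_mul]; ring

theorem stmt15_general (n k : ℕ) (hkn : k < n) :
    ∃ L₁ L₂ : ℝ, 0 < L₁ ∧ 0 < L₂ ∧
      ∀ (a : Fin (n - k) → ℝ) (b : Fin k → Fin (n - k) → ℝ),
        MemH n k (graphSet n k a b) →
        ∀ t t' : EuclideanSpace ℝ (Fin k),
          L₁ * dist t t' ≤
            dist (glue n k t (gmap n k a b t)) (glue n k t' (gmap n k a b t')) ∧
          dist (glue n k t (gmap n k a b t)) (glue n k t' (gmap n k a b t')) ≤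
            L₂ * dist t t' := by
  set C : ℝ := 1 + (n - k : ℕ) * k
  refine ⟨1, √C, one_pos, by positivity, fun a b hH t t' => ?_⟩
  have hdist := dist_glue_gmap_sq hkn.le a b t t'
  have hB : ∑ j, (∑ i, (t i - t' i) * b i j) ^ 2 ≤ (n - k : ℕ) * k * dist t t' ^ 2 := by
    simpa [EuclideanSpace.dist_sq_eq_sum] using sum_sq_sum_mul_le _ _ hH.abs_coeff_le_one
  constructor
  · rw [one_mul, ← pow_le_pow_iff_left₀ dist_nonneg dist_nonneg two_ne_zero, hdist]
    exact le_add_of_nonneg_right (Finset.sum_nonneg fun _ _ => sq_nonneg _)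
  · rw [← pow_le_pow_iff_left₀ dist_nonneg (by positivity) two_ne_zero, hdist, mul_pow,
      Real.sq_sqrt (by positivity)]
    linarith

theorem stmt15 (n k : ℕ) (hk : 1 ≤ k) (hkn : k < n) :
    ∃ L₁ L₂ : ℝ, 0 < L₁ ∧ 0 < L₂ ∧
      ∀ (a : Fin (n - k) → ℝ) (b : Fin k → Fin (n - k) → ℝ),
        MemH n k (graphSet n k a b) →
        ∀ t t' : EuclideanSpace ℝ (Fin k),
          L₁ * dist t t' ≤
            dist (glue n k t (gmap n k a b t)) (glue n k t' (gmap n k a b t')) ∧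
          dist (glue n k t (gmap n k a b t)) (glue n k t' (gmap n k a b t')) ≤
            L₂ * dist t t' :=
  stmt15_general n k hkn
end
end

section
/- Let 1 ≤ k < n be integers. There exists a constant K′ > 0 depending only on n and k such that for every P, P′ ∈ ℋ, m(P, P′) ≤ K′ · ‖x(P) − x(P′)‖, where m is the metric m(P, P′) = ‖π_{V} − π_{V′}‖_op + |a − a′| for P = V + a, P′ = V′ + a′ with V, V′ k-dimensional linear subspaces and a ∈ V^⊥, a′ ∈ (V′)^⊥. -/
/-!
Parametrise the direction of the plane with code `(a, b)` by `B t = (t, t₁b¹ + ⋯ + t_k b^k)`.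
Then `‖t‖ ≤ ‖B t‖` and `range B = V`, so for the orthogonal projections `P`, `P'` onto `V`, `V'`
we get `‖(1 - P') P‖ ≤ ‖B - B'‖` because `(1 - P') B' = 0`. Since
`P - P' = (1 - P') P - ((1 - P) P')⋆`, this gives `‖P - P'‖ ≤ 2 ‖B - B'‖`, which is linear in
the code difference. For the offsets, `(1 - P) p - (1 - P') p' = (1 - P)(p - p') + (P' - P) p'`
with base points `p = (0, a⁰)`, and `p'` lies in `[0,1]ⁿ` because `P' ∩ H₀ = {p'}`.
-/

open MeasureTheory Set
open scoped ENNReal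

noncomputable section

/-- The orthogonal projection onto a linear subspace `V ⊆ ℝⁿ`, as a continuous linear map
of the ambient space. -/
def projCLM {n : ℕ} (V : Submodule ℝ (EuclideanSpace ℝ (Fin n))) :
    EuclideanSpace ℝ (Fin n) →L[ℝ] EuclideanSpace ℝ (Fin n) :=
  V.subtypeL.comp (V.orthogonalProjection)

/-- The direction of the graph plane with code `(a, b)`: the span of the vectors
`(e_i, b^i)`, `i = 1, …, k`. -/
def dirSpan (n k : ℕ) (b : Fin k → Fin (n - k) → ℝ) :
    Submodule ℝ (EuclideanSpace ℝ (Fin n)) :=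
  Submodule.span ℝ (Set.range fun i : Fin k => glue n k (Pi.single i 1) (b i))

/-- The point `(0, a⁰) = (0, g(0))` of the graph plane with code `(a, b)`. -/
def basePt (n k : ℕ) (a : Fin (n - k) → ℝ) (b : Fin k → Fin (n - k) → ℝ) :
    EuclideanSpace ℝ (Fin n) :=
  glue n k 0 (gmap n k a b 0)

section Projections

variable {E F : Type*} [NormedAddCommGroup E] [InnerProductSpace ℝ E]
  [NormedAddCommGroup F] [NormedSpace ℝ F]

lemma norm_starProjection_orthogonal_starProjection_le {U W : Submodule ℝ E}
    [U.HasOrthogonalProjection] [W.HasOrthogonalProjection] {B B' : F →L[ℝ] E}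
    (hB : ∀ t, ‖t‖ ≤ ‖B t‖) (hU : U ≤ LinearMap.range (B : F →ₗ[ℝ] E)) (hW : ∀ t, B' t ∈ W)
    (x : E) :
    ‖Wᗮ.starProjection (U.starProjection x)‖ ≤ ‖B - B'‖ * ‖x‖ := by
  obtain ⟨t, ht⟩ := hU (U.starProjection_apply_mem x)
  replace ht : B t = U.starProjection x := ht
  have hB't : Wᗮ.starProjection (B' t) = 0 := W.starProjection_orthogonal_apply_eq_zero (hW t)
  calc ‖Wᗮ.starProjection (U.starProjection x)‖
      = ‖Wᗮ.starProjection ((B - B') t)‖ := by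
        rw [← ht, sub_apply, map_sub, hB't, sub_zero]
    _ ≤ ‖(B - B') t‖ := Wᗮ.norm_starProjection_apply_le _
    _ ≤ ‖B - B'‖ * ‖B t‖ := (B - B').le_opNorm_of_le (hB t)
    _ ≤ ‖B - B'‖ * ‖x‖ := by
        gcongr
        rw [ht]
        exact U.norm_starProjection_apply_le x

lemma norm_starProjection_sub_starProjection_le [CompleteSpace E] {U W : Submodule ℝ E}
    [U.HasOrthogonalProjection] [W.HasOrthogonalProjection] {B B' : F →L[ℝ] E}
    (hB : ∀ t, ‖t‖ ≤ ‖B t‖) (hB' : ∀ t, ‖t‖ ≤ ‖B' t‖)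
    (hU : LinearMap.range (B : F →ₗ[ℝ] E) = U) (hW : LinearMap.range (B' : F →ₗ[ℝ] E) = W) :
    ‖U.starProjection - W.starProjection‖ ≤ 2 * ‖B - B'‖ := by
  have hsplit : U.starProjection - W.starProjection =
      Wᗮ.starProjection * U.starProjection - star (Uᗮ.starProjection * W.starProjection) := by
    rw [star_mul, (isSelfAdjoint_starProjection _).star_eq,
      (isSelfAdjoint_starProjection _).star_eq, Submodule.starProjection_orthogonal',
      Submodule.starProjection_orthogonal']
    noncomm_ring
  have hWU : ‖Wᗮ.starProjection * U.starProjection‖ ≤ ‖B - B'‖ :=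
    ContinuousLinearMap.opNorm_le_bound _ (norm_nonneg _)
      (norm_starProjection_orthogonal_starProjection_le hB hU.ge
        (hW ▸ LinearMap.mem_range_self _))
  have hUW : ‖Uᗮ.starProjection * W.starProjection‖ ≤ ‖B - B'‖ := by
    rw [norm_sub_rev]
    exact ContinuousLinearMap.opNorm_le_bound _ (norm_nonneg _)
      (norm_starProjection_orthogonal_starProjection_le hB' hW.ge
        (hU ▸ LinearMap.mem_range_self _))
  calc ‖U.starProjection - W.starProjection‖
      ≤ ‖Wᗮ.starProjection * U.starProjection‖ + ‖Uᗮ.starProjection * W.starProjection‖ := by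
        rw [hsplit, ← norm_star (Uᗮ.starProjection * W.starProjection)]
        exact norm_sub_le _ _
    _ ≤ 2 * ‖B - B'‖ := by linarith

lemma dist_sub_starProjection_le (U W : Submodule ℝ E) [U.HasOrthogonalProjection]
    [W.HasOrthogonalProjection] (p p' : E) :
    dist (p - U.starProjection p) (p' - W.starProjection p') ≤
      ‖p - p'‖ + ‖U.starProjection - W.starProjection‖ * ‖p'‖ := by
  have hsplit : p - U.starProjection p - (p' - W.starProjection p') =
      Uᗮ.starProjection (p - p') - (U.starProjection - W.starProjection) p' := by
    rw [Submodule.starProjection_orthogonal']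
    simp only [sub_apply, one_apply_eq_self, map_sub]
    abel
  rw [dist_eq_norm, hsplit]
  exact (norm_sub_le _ _).trans (add_le_add (Uᗮ.norm_starProjection_apply_le _)
    ((U.starProjection - W.starProjection).le_opNorm _))

end Projections

lemma EuclideanSpace.norm_le_sqrt_card_mul {ι : Type*} [Fintype ι] {x : EuclideanSpace ℝ ι}
    {c : ℝ} (hc : 0 ≤ c) (hx : ∀ i, |x i| ≤ c) : ‖x‖ ≤ √(Fintype.card ι) * c := by
  calc ‖x‖ = √(∑ i, ‖x i‖ ^ 2) := EuclideanSpace.norm_eq x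
    _ ≤ √(∑ _i : ι, c ^ 2) := Real.sqrt_le_sqrt <| Finset.sum_le_sum fun i _ =>
        pow_le_pow_left₀ (norm_nonneg _) ((Real.norm_eq_abs _).trans_le (hx i)) 2
    _ = √(Fintype.card ι) * c := by
        rw [Finset.sum_const, Finset.card_univ, nsmul_eq_mul, Real.sqrt_mul (Nat.cast_nonneg _),
          Real.sqrt_sq hc]

variable {n k : ℕ}

lemma norm_le_sqrt_of_mem_unitCube {x : EuclideanSpace ℝ (Fin n)} (hx : x ∈ unitCube n) :
    ‖x‖ ≤ √n := by
  simpa using EuclideanSpace.norm_le_sqrt_card_mul zero_le_one fun i =>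
    abs_le.2 ⟨by linarith [(hx i).1], (hx i).2⟩

lemma glue_sub (u u' : Fin k → ℝ) (v v' : Fin (n - k) → ℝ) :
    glue n k u v - glue n k u' v' = glue n k (u - u') (v - v') := by
  ext i
  simp only [glue, PiLp.sub_apply]
  split <;> rfl

lemma abs_glue_apply_le {u : Fin k → ℝ} {v : Fin (n - k) → ℝ} {c : ℝ} (hu : ∀ i, |u i| ≤ c)
    (hv : ∀ j, |v j| ≤ c) (i : Fin n) : |glue n k u v i| ≤ c := by
  simp only [glue]
  split
  · exact hu _
  · exact hv _

lemma norm_le_norm_glue (hkn : k ≤ n) (u : Fin k → ℝ) (v : Fin (n - k) → ℝ) :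
    ‖u‖ ≤ ‖glue n k u v‖ := by
  refine (pi_norm_le_iff_of_nonneg (norm_nonneg _)).2 fun i => ?_
  have hi : glue n k u v (Fin.castLE hkn i) = u i := by simp [glue]
  exact hi ▸ PiLp.norm_apply_le _ _

def dirMap (n k : ℕ) (b : Fin k → Fin (n - k) → ℝ) :
    (Fin k → ℝ) →L[ℝ] EuclideanSpace ℝ (Fin n) :=
  LinearMap.toContinuousLinearMap
    (Fintype.linearCombination ℝ fun i => glue n k (Pi.single i 1) (b i))

lemma range_dirMap (b : Fin k → Fin (n - k) → ℝ) :
    LinearMap.range (dirMap n k b : (Fin k → ℝ) →ₗ[ℝ] EuclideanSpace ℝ (Fin n)) =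
      dirSpan n k b := by
  simp [dirMap, dirSpan]

lemma dirMap_apply (b : Fin k → Fin (n - k) → ℝ) (t : Fin k → ℝ) :
    dirMap n k b t = glue n k t fun j => ∑ i, t i * b i j := by
  ext w
  simp [dirMap, Fintype.linearCombination_apply, glue, Pi.single_apply]

lemma norm_dirMap_sub_le {b b' : Fin k → Fin (n - k) → ℝ} {r : ℝ} (hr : 0 ≤ r)
    (hb : ∀ i j, |b i j - b' i j| ≤ r) : ‖dirMap n k b - dirMap n k b'‖ ≤ √n * (k * r) := by
  refine ContinuousLinearMap.opNorm_le_bound _ (by positivity) fun t => ?_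
  have hcoord : ∀ j, |∑ i, t i * (b i j - b' i j)| ≤ k * r * ‖t‖ := fun j =>
    calc |∑ i, t i * (b i j - b' i j)| ≤ ∑ i, |t i| * |b i j - b' i j| := by
          simpa only [abs_mul] using
            Finset.abs_sum_le_sum_abs (fun i => t i * (b i j - b' i j)) Finset.univ
      _ ≤ ∑ _i : Fin k, ‖t‖ * r := by
          refine Finset.sum_le_sum fun i _ =>
            mul_le_mul ?_ (hb i j) (abs_nonneg _) (norm_nonneg _)
          exact (Real.norm_eq_abs _).symm.trans_le (norm_le_pi_norm t i)
      _ = k * r * ‖t‖ := by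
          rw [Finset.sum_const, Finset.card_univ, Fintype.card_fin, nsmul_eq_mul]
          ring
  have hdiff : (dirMap n k b - dirMap n k b') t =
      glue n k 0 fun j => ∑ i, t i * (b i j - b' i j) := by
    rw [sub_apply, dirMap_apply, dirMap_apply, glue_sub, sub_self]
    congr
    ext j
    simp [mul_sub]
  have hkrt : 0 ≤ k * r * ‖t‖ := by positivity
  rw [hdiff]
  refine (EuclideanSpace.norm_le_sqrt_card_mul hkrt
    (abs_glue_apply_le (u := 0) (fun _ => by simpa using hkrt) hcoord)).trans_eq ?_
  rw [Fintype.card_fin]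
  ring

lemma projCLM_eq_starProjection (V : Submodule ℝ (EuclideanSpace ℝ (Fin n))) :
    projCLM V = V.starProjection := rfl

lemma norm_projCLM_dirSpan_sub_le (hkn : k ≤ n) {b b' : Fin k → Fin (n - k) → ℝ} {r : ℝ}
    (hr : 0 ≤ r) (hb : ∀ i j, |b i j - b' i j| ≤ r) :
    ‖projCLM (dirSpan n k b) - projCLM (dirSpan n k b')‖ ≤ 2 * (√n * (k * r)) := by
  rw [projCLM_eq_starProjection, projCLM_eq_starProjection]
  refine (norm_starProjection_sub_starProjection_le (B := dirMap n k b) (B' := dirMap n k b')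
    ?_ ?_ (range_dirMap b) (range_dirMap b')).trans ?_
  · exact fun t => dirMap_apply b t ▸ norm_le_norm_glue hkn t _
  · exact fun t => dirMap_apply b' t ▸ norm_le_norm_glue hkn t _
  · gcongr
    exact norm_dirMap_sub_le hr hb

lemma basePt_eq_glue (a : Fin (n - k) → ℝ) (b : Fin k → Fin (n - k) → ℝ) :
    basePt n k a b = glue n k 0 a := by
  rw [basePt]
  congr
  ext j
  simp [gmap]

lemma norm_basePt_sub_le {a a' : Fin (n - k) → ℝ} (b b' : Fin k → Fin (n - k) → ℝ) {r : ℝ}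
    (hr : 0 ≤ r) (ha : ∀ j, |a j - a' j| ≤ r) :
    ‖basePt n k a b - basePt n k a' b'‖ ≤ √n * r := by
  rw [basePt_eq_glue, basePt_eq_glue, glue_sub, sub_self]
  simpa only [Fintype.card_fin] using EuclideanSpace.norm_le_sqrt_card_mul hr
    (abs_glue_apply_le (u := 0) (v := a - a') (fun _ => by simpa using hr) ha)

lemma MemH.basePt_mem_unitCube {a : Fin (n - k) → ℝ} {b : Fin k → Fin (n - k) → ℝ}
    (h : MemH n k (graphSet n k a b)) : basePt n k a b ∈ unitCube n := by
  obtain ⟨x, hx, hcap⟩ := h 0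
  have hH : basePt n k a b ∈ Hplane n k 0 := fun j hj => by
    simp [basePt_eq_glue, glue, hj]
  have hmem : basePt n k a b ∈ graphSet n k a b ∩ Hplane n k 0 := ⟨⟨0, rfl⟩, hH⟩
  rw [hcap, Set.mem_singleton_iff] at hmem
  exact hmem ▸ hx

theorem stmt16_general (n k : ℕ) (hkn : k < n) :
    ∃ K' : ℝ, 0 < K' ∧
      ∀ (a a' : Fin (n - k) → ℝ) (b b' : Fin k → Fin (n - k) → ℝ),
        MemH n k (graphSet n k a b) → MemH n k (graphSet n k a' b') →
        ∀ r : ℝ,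
          (∀ j, |a j - a' j| ≤ r) → (∀ i j, |b i j - b' i j| ≤ r) →
          ‖projCLM (dirSpan n k b) - projCLM (dirSpan n k b')‖ +
              dist (basePt n k a b - projCLM (dirSpan n k b) (basePt n k a b))
                (basePt n k a' b' - projCLM (dirSpan n k b') (basePt n k a' b')) ≤
            K' * r := by
  have hn : 0 < √n := Real.sqrt_pos.2 (by exact_mod_cast (Nat.zero_le k).trans_lt hkn)
  refine ⟨√n * (2 * k * (1 + √n) + 1), by positivity, ?_⟩
  intro a a' b b' _ hH' r ha hb
  have hr : 0 ≤ r := (abs_nonneg _).trans (ha ⟨0, by omega⟩)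
  have hP := norm_projCLM_dirSpan_sub_le hkn.le hr hb
  have hp' := norm_le_sqrt_of_mem_unitCube hH'.basePt_mem_unitCube
  have hpp := norm_basePt_sub_le b b' hr ha
  rw [projCLM_eq_starProjection, projCLM_eq_starProjection] at hP ⊢
  calc _ ≤ ‖(dirSpan n k b).starProjection - (dirSpan n k b').starProjection‖ +
          (‖basePt n k a b - basePt n k a' b'‖ +
            ‖(dirSpan n k b).starProjection - (dirSpan n k b').starProjection‖ *
              ‖basePt n k a' b'‖) := by
        gcongr
        exact dist_sub_starProjection_le _ _ _ _
    _ ≤ 2 * (√n * (k * r)) + (√n * r + 2 * (√n * (k * r)) * √n) := by gcongr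
    _ = √n * (2 * k * (1 + √n) + 1) * r := by ring

theorem stmt16 (n k : ℕ) (hk : 1 ≤ k) (hkn : k < n) :
    ∃ K' : ℝ, 0 < K' ∧
      ∀ (a a' : Fin (n - k) → ℝ) (b b' : Fin k → Fin (n - k) → ℝ),
        MemH n k (graphSet n k a b) → MemH n k (graphSet n k a' b') →
        ∀ r : ℝ,
          (∀ j, |a j - a' j| ≤ r) → (∀ i j, |b i j - b' i j| ≤ r) →
          ‖projCLM (dirSpan n k b) - projCLM (dirSpan n k b')‖ +
              dist (basePt n k a b - projCLM (dirSpan n k b) (basePt n k a b))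
                (basePt n k a' b' - projCLM (dirSpan n k b') (basePt n k a' b')) ≤
            K' * r :=
  stmt16_general n k hkn
end
end
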